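/- Let A be a partial nonnegative symmetric matrix with index set E such that exactly one diagonal index (1,1) ∈ E with A₁₁ > 0 and no other diagonal indices are in E. Then A is CP-completable. -/

import Mathlib

/-!
A nonnegative symmetric matrix `M` that is diagonally dominant is completely positive: it is the
sum of the rank-one matrices `(M i j / 2) (eᵢ + eⱼ)(eᵢ + eⱼ)ᵀ`, `i ≠ j`, and a nonnegative
diagonal matrix. Congruence by a positive diagonal matrix preserves complete positivity, so
diagonal dominance after weighting the rows and columns by positive `dᵢ` suffices.

To complete `A`, fill the unspecified off-diagonal entries with `0` (symmetrically), give the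
free diagonal entries large values, and give index `0` the weight `1 + r / A₀₀`, where `r` is
the sum of the off-diagonal entries of row `0`: then the prescribed entry `A₀₀ > 0` dominates
its weighted row.
-/

def IsCP {n : ℕ} (C : Matrix (Fin n) (Fin n) ℝ) : Prop :=
  ∃ (m : ℕ) (B : Matrix (Fin n) (Fin m) ℝ), (∀ i j, 0 ≤ B i j) ∧ C = B * B.transpose

open Matrix Finset

namespace IsCP

variable {n : ℕ}

theorem of_mul_transpose {ι : Type*} [Fintype ι] (B : Matrix (Fin n) ι ℝ)
    (hB : ∀ i k, 0 ≤ B i k) : IsCP (B * Bᵀ) :=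
  ⟨_, B.submatrix id (Fintype.equivFin ι).symm, fun _ _ => hB _ _,
    by rw [transpose_submatrix, submatrix_mul_equiv, submatrix_id_id]⟩

theorem add {C D : Matrix (Fin n) (Fin n) ℝ} (hC : IsCP C) (hD : IsCP D) : IsCP (C + D) := by
  obtain ⟨_, B₁, hB₁, rfl⟩ := hC
  obtain ⟨_, B₂, hB₂, rfl⟩ := hD
  rw [← fromCols_mul_fromRows, ← transpose_fromCols]
  exact of_mul_transpose _ fun i k => by cases k <;> simp [hB₁, hB₂]

theorem zero : IsCP (0 : Matrix (Fin n) (Fin n) ℝ) :=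
  ⟨0, 0, fun _ _ => le_rfl, by simp⟩

theorem sum {ι : Type*} {s : Finset ι} {C : ι → Matrix (Fin n) (Fin n) ℝ}
    (hC : ∀ i ∈ s, IsCP (C i)) : IsCP (∑ i ∈ s, C i) :=
  Finset.sum_induction C IsCP (fun _ _ => add) zero hC

theorem diagonal {d : Fin n → ℝ} (hd : ∀ i, 0 ≤ d i) : IsCP (Matrix.diagonal d) := by
  have : Matrix.diagonal d =
      Matrix.diagonal (fun i => √(d i)) * (Matrix.diagonal fun i => √(d i))ᵀ := by
    simp [Real.mul_self_sqrt (hd _)]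
  rw [this]
  exact of_mul_transpose _ fun i k => by by_cases h : i = k <;> simp [h]

theorem vecMulVec_self {v : Fin n → ℝ} (hv : ∀ i, 0 ≤ v i) : IsCP (vecMulVec v v) := by
  have : vecMulVec v v = replicateCol Unit v * (replicateCol Unit v)ᵀ := by
    ext; simp [vecMulVec_apply, mul_apply]
  rw [this]
  exact of_mul_transpose _ fun i _ => hv i

theorem smul {C : Matrix (Fin n) (Fin n) ℝ} (hC : IsCP C) {c : ℝ} (hc : 0 ≤ c) :
    IsCP (c • C) := by
  obtain ⟨_, B, hB, rfl⟩ := hC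
  have : c • (B * Bᵀ) = (√c • B) * (√c • B)ᵀ := by
    rw [transpose_smul, smul_mul, Matrix.mul_smul, smul_smul, Real.mul_self_sqrt hc]
  rw [this]
  exact of_mul_transpose _ fun i k => mul_nonneg (Real.sqrt_nonneg c) (hB i k)

theorem mul_mul_transpose {C : Matrix (Fin n) (Fin n) ℝ} (hC : IsCP C)
    {P : Matrix (Fin n) (Fin n) ℝ} (hP : ∀ i j, 0 ≤ P i j) : IsCP (P * C * Pᵀ) := by
  obtain ⟨_, B, hB, rfl⟩ := hC
  rw [← Matrix.mul_assoc, Matrix.mul_assoc (P * B), ← transpose_mul]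
  exact of_mul_transpose _ fun i k => by
    rw [mul_apply]; exact Finset.sum_nonneg fun j _ => mul_nonneg (hP i j) (hB j k)

theorem add_transpose_add_diagonal {W : Matrix (Fin n) (Fin n) ℝ}
    (hW : ∀ i j, 0 ≤ W i j) :
    IsCP (W + Wᵀ + Matrix.diagonal fun k => ∑ j, W k j + ∑ i, W i k) := by
  have h : W + Wᵀ + Matrix.diagonal (fun k => ∑ j, W k j + ∑ i, W i k) =
      ∑ i, ∑ j, W i j •
        vecMulVec (Pi.single i 1 + Pi.single j 1) (Pi.single i 1 + Pi.single j 1) := by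
    ext k l
    simp only [Matrix.add_apply, Matrix.sum_apply, Matrix.smul_apply, vecMulVec_apply,
      Pi.add_apply, Pi.single_apply, diagonal_apply, smul_eq_mul, transpose_apply]
    rcases eq_or_ne k l with rfl | hkl
    · simp [mul_add, sum_add_distrib]
      ring
    · simp [mul_add, sum_add_distrib, hkl]
      ring
  rw [h]
  refine sum fun i _ => sum fun j _ => (vecMulVec_self fun k => ?_).smul (hW i j)
  simp only [Pi.add_apply, Pi.single_apply]
  positivity

theorem of_diagDominant {M : Matrix (Fin n) (Fin n) ℝ} (hM : M.IsSymm)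
    (hM₀ : ∀ i j, 0 ≤ M i j)
    (hdom : ∀ i, ∑ j ∈ univ.erase i, M i j ≤ M i i) : IsCP M := by
  set W : Matrix (Fin n) (Fin n) ℝ := of fun i j => if i = j then 0 else M i j / 2
  have hW : ∀ i j, 0 ≤ W i j := fun i j => by
    simp only [W, of_apply]; split_ifs <;> linarith [hM₀ i j]
  have hrow : ∀ k, ∑ j, W k j = (∑ j ∈ univ.erase k, M k j) / 2 := fun k => by
    rw [← add_sum_erase _ _ (mem_univ k), sum_div]
    simp only [W, of_apply, ↓reduceIte, zero_add]
    exact sum_congr rfl fun j hj => by rw [if_neg (ne_of_mem_erase hj).symm]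
  have hcol : ∀ k, ∑ i, W i k = ∑ j, W k j := fun k =>
    sum_congr rfl fun i _ => by simp only [W, of_apply, eq_comm, hM.apply]
  have h : M = (W + Wᵀ + Matrix.diagonal fun k => ∑ j, W k j + ∑ i, W i k) +
      Matrix.diagonal fun i => M i i - ∑ j ∈ univ.erase i, M i j := by
    ext k l
    simp only [Matrix.add_apply, transpose_apply, diagonal_apply, hcol, hrow]
    rcases eq_or_ne k l with rfl | hkl
    · simp only [W, of_apply, ↓reduceIte]
      ring
    · simp [W, hkl, hkl.symm, hM.apply]
  rw [h]
  exact (add_transpose_add_diagonal hW).add (diagonal fun i => sub_nonneg.2 (hdom i))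

theorem of_diagDominant_scaled {M : Matrix (Fin n) (Fin n) ℝ} (hM : M.IsSymm)
    (hM₀ : ∀ i j, 0 ≤ M i j) {d : Fin n → ℝ} (hd : ∀ i, 0 < d i)
    (hdom : ∀ i, ∑ j ∈ univ.erase i, M i j * d j ≤ M i i * d i) : IsCP M := by
  set N := Matrix.diagonal d * M * Matrix.diagonal d
  have hN : N.IsSymm := by
    ext i j
    simp only [N, transpose_apply, diagonal_mul, mul_diagonal, hM.apply]
    ring
  have hN₀ : ∀ i j, 0 ≤ N i j := fun i j => by
    simp only [N, diagonal_mul, mul_diagonal]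
    exact mul_nonneg (mul_nonneg (hd i).le (hM₀ i j)) (hd j).le
  have hNdom : ∀ i, ∑ j ∈ univ.erase i, N i j ≤ N i i := fun i => by
    simp only [N, diagonal_mul, mul_diagonal, mul_assoc, ← mul_sum]
    exact mul_le_mul_of_nonneg_left (hdom i) (hd i).le
  have hMN : M = Matrix.diagonal d⁻¹ * N * (Matrix.diagonal d⁻¹)ᵀ := by
    ext i j
    simp only [N, diagonal_transpose, diagonal_mul, mul_diagonal, Pi.inv_apply]
    field_simp [(hd i).ne', (hd j).ne']
  rw [hMN]
  refine (of_diagDominant hN hN₀ hNdom).mul_mul_transpose fun i j => ?_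
  by_cases h : i = j <;> simp [h, (hd j).le]

end IsCP

theorem exists_isCP_offDiag_eq_diag_eq {n : ℕ} {S : Matrix (Fin n) (Fin n) ℝ}
    (hS : S.IsSymm) (hS₀ : ∀ i j, 0 ≤ S i j) (i₀ : Fin n) {a : ℝ} (ha : 0 < a) :
    ∃ C : Matrix (Fin n) (Fin n) ℝ,
      IsCP C ∧ C i₀ i₀ = a ∧ ∀ i j, i ≠ j → C i j = S i j := by
  set r : Fin n → ℝ := fun i => ∑ j ∈ univ.erase i, S i j
  have hr : ∀ i, 0 ≤ r i := fun i => sum_nonneg fun j _ => hS₀ i j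
  set c := 1 + r i₀ / a
  have hc : 1 ≤ c := le_add_of_nonneg_right (div_nonneg (hr i₀) ha.le)
  set C : Matrix (Fin n) (Fin n) ℝ :=
    of fun i j => if i ≠ j then S i j else if i = i₀ then a else c * r i
  refine ⟨C, ?_, by simp [C], fun i j h => by simp [C, h]⟩
  refine IsCP.of_diagDominant_scaled (d := fun i => if i = i₀ then c else 1) ?_ ?_ ?_ ?_
  · ext i j
    by_cases h : i = j
    · simp [C, h]
    · simp [C, h, Ne.symm h, hS.apply]
  · intro i j
    simp only [C, of_apply]
    split_ifs
    exacts [hS₀ i j, ha.le, mul_nonneg (by linarith) (hr i)]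
  · intro i
    split_ifs <;> linarith
  · intro i
    have hoff : ∀ j ∈ univ.erase i, C i j = S i j := fun j hj => by
      simp [C, (ne_of_mem_erase hj).symm]
    rw [sum_congr rfl fun j hj => by rw [hoff j hj]]
    by_cases hi : i = i₀
    · subst hi
      have : ∑ j ∈ univ.erase i, S i j * (if j = i then c else 1) = r i :=
        sum_congr rfl fun j hj => by rw [if_neg (ne_of_mem_erase hj), mul_one]
      simp only [this, C, of_apply, ne_eq, not_true_eq_false, ↓reduceIte, c]
      field_simp
      linarith
    · calc ∑ j ∈ univ.erase i, S i j * (if j = i₀ then c else 1)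
          ≤ ∑ j ∈ univ.erase i, S i j * c := sum_le_sum fun j _ =>
            mul_le_mul_of_nonneg_left (by split_ifs <;> linarith) (hS₀ i j)
        _ = C i i * (if i = i₀ then c else 1) := by
          simp only [C, of_apply, ne_eq, not_true_eq_false, ↓reduceIte, hi, r, ← sum_mul]
          ring

theorem cp_completable_one_diagonal_general {n : ℕ} (E : Finset (Fin (n+1) × Fin (n+1)))
    (A : Fin (n+1) × Fin (n+1) → ℝ)
    (hord : ∀ p ∈ E, p.1 ≤ p.2)
    (hdiag : ∀ p ∈ E, p.1 = p.2 → p = (0, 0))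
    (hA : ∀ p ∈ E, 0 ≤ A p)
    (hpos : 0 < A (0, 0)) :
    ∃ C : Matrix (Fin (n+1)) (Fin (n+1)) ℝ,
      IsCP C ∧ ∀ p ∈ E, C p.1 p.2 = A p := by
  set S : Matrix (Fin (n+1)) (Fin (n+1)) ℝ :=
    of fun i j => if (i, j) ∈ E then A (i, j) else if (j, i) ∈ E then A (j, i) else 0
  have hS : S.IsSymm := by
    ext i j
    by_cases hij : (i, j) ∈ E <;> by_cases hji : (j, i) ∈ E
    · obtain rfl : i = j := le_antisymm (hord _ hij) (hord _ hji)
      rfl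
    all_goals simp [S, hij, hji]
  have hS₀ : ∀ i j, 0 ≤ S i j := fun i j => by
    simp only [S, of_apply]
    split_ifs with hij hji
    exacts [hA _ hij, hA _ hji, le_rfl]
  obtain ⟨C, hC, hC₀, hCS⟩ := exists_isCP_offDiag_eq_diag_eq hS hS₀ 0 hpos
  refine ⟨C, hC, fun p hp => ?_⟩
  by_cases hp' : p.1 = p.2
  · rw [hdiag p hp hp']
    exact hC₀
  · simp [hCS _ _ hp', S, hp]

/-- If a partial nonnegative symmetric matrix has exactly one given diagonal
entry, which is positive, then it is CP-completable. -/
theorem cp_completable_one_diagonal {n : ℕ} (E : Finset (Fin (n+1) × Fin (n+1)))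
    (A : Fin (n+1) × Fin (n+1) → ℝ)
    (hord : ∀ p ∈ E, p.1 ≤ p.2)
    (h00 : ((0, 0) : Fin (n+1) × Fin (n+1)) ∈ E)
    (hdiag : ∀ p ∈ E, p.1 = p.2 → p = (0, 0))
    (hA : ∀ p ∈ E, 0 ≤ A p)
    (hpos : 0 < A (0, 0)) :
    ∃ C : Matrix (Fin (n+1)) (Fin (n+1)) ℝ,
      IsCP C ∧ ∀ p ∈ E, C p.1 p.2 = A p :=
  cp_completable_one_diagonal_general E A hord hdiag hA hpos
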